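/- arXiv:1305.6791 — 3 statements merged into one kernel-verified Lean document; each statement's English description precedes it below -/
import Mathlib

section
/- Let p > 2 and let α, β, μ, δ, k be real numbers with α, β, μ, δ > 0 satisfying (1/2)α + (1/2)β + (1/4)μ - δ/(p+1) = k and (3/2)α + (5/2)β + (3/2)μ - (p+4)δ/(p+1) = 0. Then k > (α+β)(p-1)/(2(p+4)); in particular k > 0. -/
lemma eq_of_energy_of_pohozaev {p α β μ δ k : ℝ} (hp4 : p + 4 ≠ 0)
    (h1 : (1/2) * α + (1/2) * β + (1/4) * μ - δ / (p+1) = k)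
    (h2 : (3/2) * α + (5/2) * β + (3/2) * μ - (p+4) * δ / (p+1) = 0) :
    k = (α + β) * (p - 1) / (2 * (p + 4)) + (4 * α + (p - 2) * μ) / (4 * (p + 4)) := by
  have hδ : δ / (p + 1) = (3 * α + 5 * β + 3 * μ) / (2 * (p + 4)) := by
    rw [eq_div_iff (by simpa using hp4)]
    linear_combination (-2) * h2
  rw [← h1, hδ]
  field_simp
  ring

theorem stmt_1_general (p α β μ δ k : ℝ) (hp : 2 < p)
    (hα : 0 < α) (hβ : 0 < β) (hμ : 0 < μ)
    (h1 : (1/2) * α + (1/2) * β + (1/4) * μ - δ / (p+1) = k)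
    (h2 : (3/2) * α + (5/2) * β + (3/2) * μ - (p+4) * δ / (p+1) = 0) :
    (α + β) * (p - 1) / (2 * (p + 4)) < k ∧ 0 < k := by
  have hp4 : 0 < p + 4 := by linarith
  have hk := eq_of_energy_of_pohozaev hp4.ne' h1 h2
  have hbound : 0 < (α + β) * (p - 1) / (2 * (p + 4)) := by
    have : 0 < p - 1 := by linarith
    positivity
  have hexcess : 0 < (4 * α + (p - 2) * μ) / (4 * (p + 4)) := by
    have : 0 < p - 2 := by linarith
    positivity
  exact ⟨by linarith, by linarith⟩

/-- Step 2 of Lemma 2.6: on the manifold, I(u) = k > (α+β)(p-1)/(2(p+4)) > 0. -/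
theorem stmt_1 (p α β μ δ k : ℝ) (hp : 2 < p)
    (hα : 0 < α) (hβ : 0 < β) (hμ : 0 < μ) (hδ : 0 < δ)
    (h1 : (1/2) * α + (1/2) * β + (1/4) * μ - δ / (p+1) = k)
    (h2 : (3/2) * α + (5/2) * β + (3/2) * μ - (p+4) * δ / (p+1) = 0) :
    (α + β) * (p - 1) / (2 * (p + 4)) < k ∧ 0 < k :=
  stmt_1_general p α β μ δ k hp hα hβ hμ h1 h2
end

section
/- Let 2 < p < 5, k > 0, and λ ∈ ℝ with λ ≠ 0 and λ ≠ (2p-1)/(9p). Define β = -18k(p-5)((p+4)λ-1)/((p-1)(2p-1-9pλ)) and δ = 36k(p+1)(5λ-1)/((p-1)(2p-1-9pλ)). Then it is impossible that both β > 0 and δ > 0. More precisely: δ ≤ 0 whenever λ ≥ 1/5 or λ < (2p-1)/(9p), and β < 0 whenever (2p-1)/(9p) < λ < 1/5. -/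
/-! The signs of β and δ are read off from the signs of the factors `5λ - 1`, `(p + 4)λ - 1`
and `2p - 1 - 9pλ`, which change at `1/5`, `1/(p + 4)` and `λ₀ = (2p - 1)/(9p)` respectively.
For `2 < p < 5` these thresholds are ordered as `1/(p + 4) < λ₀ < 1/5`: below `λ₀` and above `1/5`
the numerator and denominator of δ have opposite signs, while between `λ₀` and `1/5` those of β
do. -/

section Thresholds

variable {p l : ℝ}

lemma lt_threshold_iff (hp : 0 < p) : l < (2*p - 1) / (9*p) ↔ 0 < 2*p - 1 - 9*p*l := by
  rw [lt_div_iff₀ (by positivity)]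
  constructor <;> intro h <;> linarith

lemma threshold_lt_iff (hp : 0 < p) : (2*p - 1) / (9*p) < l ↔ 2*p - 1 - 9*p*l < 0 := by
  rw [div_lt_iff₀ (by positivity)]
  constructor <;> intro h <;> linarith

lemma threshold_lt_one_fifth (hp : 0 < p) (hp5 : p < 5) : (2*p - 1) / (9*p) < 1/5 := by
  rw [div_lt_div_iff₀ (by positivity) (by norm_num)]
  linarith

lemma one_lt_mul_of_threshold_lt (hp : 2 < p) (hl : (2*p - 1) / (9*p) < l) : 1 < (p + 4) * l := by
  rw [div_lt_iff₀ (by positivity)] at hl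
  nlinarith

end Thresholds

section Signs

variable {p k l : ℝ}

lemma delta_nonpos (hp1 : 2 < p) (hp2 : p < 5) (hk : 0 < k)
    (hl : 1/5 ≤ l ∨ l < (2*p - 1) / (9*p)) :
    36 * k * (p+1) * (5*l - 1) / ((p - 1) * (2*p - 1 - 9*p*l)) ≤ 0 := by
  have hkp : 0 < 36 * k * (p + 1) := by positivity
  rcases hl with hl | hl
  · have hden : 2*p - 1 - 9*p*l < 0 := (threshold_lt_iff (by linarith)).1
      ((threshold_lt_one_fifth (by linarith) hp2).trans_le hl)
    refine div_nonpos_of_nonneg_of_nonpos ?_ (mul_neg_of_pos_of_neg (by linarith) hden).le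
    exact mul_nonneg hkp.le (by linarith)
  · have hden : 0 < 2*p - 1 - 9*p*l := (lt_threshold_iff (by linarith)).1 hl
    have hl5 : l < 1/5 := hl.trans (threshold_lt_one_fifth (by linarith) hp2)
    refine div_nonpos_of_nonpos_of_nonneg ?_ (mul_pos (by linarith) hden).le
    exact mul_nonpos_of_nonneg_of_nonpos hkp.le (by linarith)

lemma beta_neg (hp1 : 2 < p) (hp2 : p < 5) (hk : 0 < k)
    (hl : (2*p - 1) / (9*p) < l ∧ l < 1/5) :
    -(18 * k * (p - 5) * ((p+4)*l - 1)) / ((p - 1) * (2*p - 1 - 9*p*l)) < 0 := by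
  have hden : 2*p - 1 - 9*p*l < 0 := (threshold_lt_iff (by linarith)).1 hl.1
  have hnum : 0 < 18 * k * (5 - p) * ((p+4)*l - 1) := by
    have := one_lt_mul_of_threshold_lt hp1 hl.1
    have : 0 < 5 - p := by linarith
    positivity
  refine div_neg_of_pos_of_neg ?_ (mul_neg_of_pos_of_neg (by linarith) hden)
  linarith

end Signs

theorem stmt_4_general (p k l : ℝ) (hp1 : 2 < p) (hp2 : p < 5) (hk : 0 < k)
    (hl1 : l ≠ (2*p - 1) / (9*p))
    (β δ : ℝ)
    (hβ : β = -(18 * k * (p - 5) * ((p+4)*l - 1)) / ((p - 1) * (2*p - 1 - 9*p*l)))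
    (hδ : δ = 36 * k * (p+1) * (5*l - 1) / ((p - 1) * (2*p - 1 - 9*p*l))) :
    ¬ (0 < β ∧ 0 < δ) ∧
      ((1/5 ≤ l ∨ l < (2*p - 1) / (9*p)) → δ ≤ 0) ∧
      ((2*p - 1) / (9*p) < l ∧ l < 1/5 → β < 0) := by
  subst hβ hδ
  have hδ := delta_nonpos (l := l) hp1 hp2 hk
  have hβ := beta_neg (l := l) hp1 hp2 hk
  refine ⟨?_, hδ, hβ⟩
  rintro ⟨hβpos, hδpos⟩
  rcases lt_or_gt_of_ne hl1 with hl | hl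
  · exact (hδ (Or.inr hl)).not_gt hδpos
  · rcases lt_or_ge l (1/5) with hl5 | hl5
    · exact (hβ ⟨hl, hl5⟩).not_gt hβpos
    · exact (hδ (Or.inl hl5)).not_gt hδpos

/-- Case (1) in Step 4 of Lemma 2.6: the solution components β, δ cannot both be
positive. -/
theorem stmt_4 (p k l : ℝ) (hp1 : 2 < p) (hp2 : p < 5) (hk : 0 < k)
    (hl0 : l ≠ 0) (hl1 : l ≠ (2*p - 1) / (9*p))
    (β δ : ℝ)
    (hβ : β = -(18 * k * (p - 5) * ((p+4)*l - 1)) / ((p - 1) * (2*p - 1 - 9*p*l)))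
    (hδ : δ = 36 * k * (p+1) * (5*l - 1) / ((p - 1) * (2*p - 1 - 9*p*l))) :
    ¬ (0 < β ∧ 0 < δ) ∧
      ((1/5 ≤ l ∨ l < (2*p - 1) / (9*p)) → δ ≤ 0) ∧
      ((2*p - 1) / (9*p) < l ∧ l < 1/5 → β < 0) :=
  stmt_4_general p k l hp1 hp2 hk hl1 β δ hβ hδ
end

section
/- Let A, B, D > 0, a, b > 0, p > 2. Then there exists a unique t̃ > 0 such that (3/2)a t̃² A + (5/2) t̃⁴ B + (3/2) b t̃⁵ A² - ((p+4)/(p+1)) t̃^{p+3} D = 0, and the function γ(t) = (a/2)t³A + (1/2)t⁵B + (b/4)t⁶A² - (1/(p+1))t^{p+4}D attains its maximum over (0,∞) at t̃. -/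
/-!
For `t > 0` one has `γ'(t) = t^(p+3) f(t)` with
`f(t) = (3/2) a A t^(-(p+1)) + (5/2) B t^(1-p) + (3/2) b A² t^(2-p) - (p+4)/(p+1) D`.
Since `p > 2`, all powers of `t` in `f` are negative, so `f` decreases strictly from `+∞` at `0⁺`
to `-(p+4)/(p+1) D < 0` at `∞`. Hence `f`, and with it `γ'`, has exactly one zero `t̃` on `(0, ∞)`;
`γ` increases before `t̃` and decreases after it, so `t̃` is the maximum.
-/

open Real Set Filter Topology

section NegativePower

variable {c q : ℝ}

lemma strictAntiOn_const_mul_rpow_of_neg (hc : 0 < c) (hq : q < 0) :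
    StrictAntiOn (fun t : ℝ => c * t ^ q) (Ioi 0) :=
  fun _ hx _ _ hxy => mul_lt_mul_of_pos_left (rpow_lt_rpow_of_neg hx hxy hq) hc

lemma tendsto_rpow_atTop_of_neg (hq : q < 0) : Tendsto (fun t : ℝ => t ^ q) atTop (𝓝 0) := by
  simpa using tendsto_rpow_neg_atTop (neg_pos.2 hq)

end NegativePower

lemma exists_eq_zero_of_continuousOn_Ioi {f : ℝ → ℝ} {a : ℝ} (hf : ContinuousOn f (Ioi a))
    (hpos : ∀ᶠ t in 𝓝[>] a, 0 < f t) (hneg : ∀ᶠ t in atTop, f t < 0) :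
    ∃ T, a < T ∧ f T = 0 := by
  obtain ⟨t₀, hft₀, ht₀⟩ := (hpos.and (self_mem_nhdsWithin : Ioi a ∈ 𝓝[>] a)).exists
  obtain ⟨t₁, hft₁, ht₀₁⟩ := (hneg.and (eventually_gt_atTop t₀)).exists
  obtain ⟨T, hT, hfT⟩ := intermediate_value_Icc' ht₀₁.le
    (hf.mono fun t ht => lt_of_lt_of_le ht₀ ht.1) ⟨hft₁.le, hft₀.le⟩
  exact ⟨T, lt_of_lt_of_le ht₀ hT.1, hfT⟩

lemma isMaxOn_Ioi_of_hasDerivAt {γ γ' : ℝ → ℝ} {a T : ℝ} (haT : a < T)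
    (hγ : ∀ t ∈ Ioi a, HasDerivAt γ (γ' t) t)
    (hinc : ∀ t ∈ Ioo a T, 0 ≤ γ' t) (hdec : ∀ t ∈ Ioi T, γ' t ≤ 0) :
    IsMaxOn γ (Ioi a) T := by
  have hcont : ContinuousOn γ (Ioi a) := fun t ht => (hγ t ht).continuousAt.continuousWithinAt
  have hmono : MonotoneOn γ (Ioc a T) :=
    monotoneOn_of_hasDerivWithinAt_nonneg (convex_Ioc a T) (hcont.mono Ioc_subset_Ioi_self)
      (fun t ht => (hγ t (interior_subset ht).1).hasDerivWithinAt)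
      (by rwa [interior_Ioc])
  have hanti : AntitoneOn γ (Ici T) :=
    antitoneOn_of_hasDerivWithinAt_nonpos (convex_Ici T)
      (hcont.mono fun t ht => lt_of_lt_of_le haT ht)
      (fun t ht => (hγ t (haT.trans (by rwa [interior_Ici] at ht))).hasDerivWithinAt)
      (by rwa [interior_Ici])
  intro s hs
  rcases le_total s T with hsT | hTs
  · exact hmono ⟨hs, hsT⟩ ⟨haT, le_rfl⟩ hsT
  · exact hanti self_mem_Ici hTs hTs

section Fibering

variable {A B D a b p : ℝ}

noncomputable def fiberingSlope (A B D a b p t : ℝ) : ℝ :=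
  3/2 * a * A * t ^ (-(p + 1)) + 5/2 * B * t ^ (1 - p) + 3/2 * b * A ^ 2 * t ^ (2 - p)
    - (p + 4) / (p + 1) * D

lemma fiberingDeriv_eq_rpow_mul_fiberingSlope {t : ℝ} (ht : 0 < t) :
    (3/2) * a * t ^ 2 * A + (5/2) * t ^ 4 * B + (3/2) * b * t ^ 5 * A ^ 2
      - (p + 4) / (p + 1) * t ^ (p + 3) * D = t ^ (p + 3) * fiberingSlope A B D a b p t := by
  have hpow : ∀ (q : ℝ) (n : ℕ), p + 3 + q = n → t ^ (p + 3) * t ^ q = t ^ n := fun q n h => by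
    rw [← rpow_add ht, h, rpow_natCast]
  have e₂ := hpow (-(p + 1)) 2 (by push_cast; ring)
  have e₄ := hpow (1 - p) 4 (by push_cast; ring)
  have e₅ := hpow (2 - p) 5 (by push_cast; ring)
  rw [fiberingSlope]
  linear_combination (-(3/2 * a * A)) * e₂ - (5/2 * B) * e₄ - (3/2 * b * A ^ 2) * e₅

lemma hasDerivAt_fibering {t : ℝ} (ht : 0 < t) :
    HasDerivAt (fun s => a / 2 * s ^ 3 * A + 1 / 2 * s ^ 5 * B + b / 4 * s ^ 6 * A ^ 2
        - 1 / (p + 1) * s ^ (p + 4) * D) (t ^ (p + 3) * fiberingSlope A B D a b p t) t := by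
  have hrpow : HasDerivAt (fun s : ℝ => s ^ (p + 4)) ((p + 4) * t ^ (p + 3)) t := by
    simpa [show p + 4 - 1 = p + 3 by ring] using hasDerivAt_rpow_const (p := p + 4) (Or.inl ht.ne')
  refine ((((hasDerivAt_pow 3 t).const_mul (a / 2)).mul_const A).add
      (((hasDerivAt_pow 5 t).const_mul (1 / 2)).mul_const B)).add
      (((hasDerivAt_pow 6 t).const_mul (b / 4)).mul_const (A ^ 2)) |>.sub
      ((hrpow.const_mul (1 / (p + 1))).mul_const D) |>.congr_deriv ?_
  rw [← fiberingDeriv_eq_rpow_mul_fiberingSlope ht]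
  push_cast
  ring

variable (hA : 0 < A) (hB : 0 < B) (hD : 0 < D) (ha : 0 < a) (hb : 0 < b) (hp : 2 < p)
include hA hB ha hb hp

lemma strictAntiOn_fiberingSlope : StrictAntiOn (fiberingSlope A B D a b p) (Ioi 0) := by
  have h := ((strictAntiOn_const_mul_rpow_of_neg (by positivity : 0 < 3/2 * a * A)
    (by linarith : -(p + 1) < 0)).add (strictAntiOn_const_mul_rpow_of_neg
    (by positivity : 0 < 5/2 * B) (by linarith : 1 - p < 0))).add
    (strictAntiOn_const_mul_rpow_of_neg (by positivity : 0 < 3/2 * b * A ^ 2)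
    (by linarith : 2 - p < 0))
  exact fun x hx y hy hxy => by simpa [fiberingSlope] using h hx hy hxy

lemma eventually_fiberingSlope_pos_nhdsGT_zero :
    ∀ᶠ t in 𝓝[>] 0, 0 < fiberingSlope A B D a b p t := by
  have hlead : Tendsto (fun t : ℝ => 3/2 * a * A * t ^ (-(p + 1))) (𝓝[>] 0) atTop :=
    (tendsto_rpow_neg_nhdsGT_zero (by linarith)).const_mul_atTop (by positivity)
  filter_upwards [hlead.eventually_gt_atTop ((p + 4) / (p + 1) * D), self_mem_nhdsWithin]
    with t hlarge (ht : 0 < t)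
  have : 0 < 5/2 * B * t ^ (1 - p) + 3/2 * b * A ^ 2 * t ^ (2 - p) := by positivity
  rw [fiberingSlope]
  linarith

omit hA hB ha hb in
include hD in
lemma eventually_fiberingSlope_neg_atTop : ∀ᶠ t in atTop, fiberingSlope A B D a b p t < 0 := by
  have hlim : Tendsto (fiberingSlope A B D a b p) atTop
      (𝓝 (3/2 * a * A * 0 + 5/2 * B * 0 + 3/2 * b * A ^ 2 * 0 - (p + 4) / (p + 1) * D)) :=
    ((((tendsto_rpow_atTop_of_neg (by linarith)).const_mul _).add
      ((tendsto_rpow_atTop_of_neg (by linarith)).const_mul _)).add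
      ((tendsto_rpow_atTop_of_neg (by linarith)).const_mul _)).sub tendsto_const_nhds
  refine hlim.eventually_lt_const ?_
  have : 0 < (p + 4) / (p + 1) * D := by
    have : 0 < p + 1 := by linarith
    positivity
  linarith

omit hA hB ha hb hp in
lemma continuousOn_fiberingSlope : ContinuousOn (fiberingSlope A B D a b p) (Ioi 0) := by
  intro t ht
  have hrpow (q : ℝ) := continuousAt_rpow_const t q (Or.inl (ne_of_gt ht))
  exact ((((continuousAt_const.mul (hrpow _)).add (continuousAt_const.mul (hrpow _))).add
    (continuousAt_const.mul (hrpow _))).sub continuousAt_const).continuousWithinAt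

end Fibering

/-- Lemma 2.5 (algebraic core): there is a unique t̃ > 0 with G(u_{t̃}) = 0, and it
maximizes γ(t) = I(u_t) over (0, ∞). -/
theorem stmt_11 (A B D a b p : ℝ) (hA : 0 < A) (hB : 0 < B) (hD : 0 < D)
    (ha : 0 < a) (hb : 0 < b) (hp : 2 < p)
    (γ : ℝ → ℝ)
    (hγ : ∀ t : ℝ, γ t = a / 2 * t ^ 3 * A + 1 / 2 * t ^ 5 * B + b / 4 * t ^ 6 * A ^ 2
        - 1 / (p + 1) * t ^ (p + 4) * D) :
    ∃ t : ℝ, 0 < t ∧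
      (3/2) * a * t ^ 2 * A + (5/2) * t ^ 4 * B + (3/2) * b * t ^ 5 * A ^ 2
        - (p + 4) / (p + 1) * t ^ (p + 3) * D = 0 ∧
      (∀ s : ℝ, 0 < s →
        (3/2) * a * s ^ 2 * A + (5/2) * s ^ 4 * B + (3/2) * b * s ^ 5 * A ^ 2
          - (p + 4) / (p + 1) * s ^ (p + 3) * D = 0 → s = t) ∧
      ∀ s : ℝ, 0 < s → γ s ≤ γ t := by
  obtain rfl : γ = _ := funext hγ
  have hanti : StrictAntiOn (fiberingSlope A B D a b p) (Ioi 0) :=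
    strictAntiOn_fiberingSlope hA hB ha hb hp
  obtain ⟨T, hT, hfT⟩ := exists_eq_zero_of_continuousOn_Ioi continuousOn_fiberingSlope
    (eventually_fiberingSlope_pos_nhdsGT_zero hA hB ha hb hp)
    (eventually_fiberingSlope_neg_atTop hD hp)
  refine ⟨T, hT, ?_, fun s hs hGs => ?_, ?_⟩
  · rw [fiberingDeriv_eq_rpow_mul_fiberingSlope hT, hfT, mul_zero]
  · rw [fiberingDeriv_eq_rpow_mul_fiberingSlope hs] at hGs
    have hfs := (mul_eq_zero.1 hGs).resolve_left (rpow_pos_of_pos hs _).ne'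
    exact hanti.injOn hs hT (hfs.trans hfT.symm)
  · refine isMaxOn_Ioi_of_hasDerivAt hT (fun t ht => hasDerivAt_fibering ht)
      (fun t ht => ?_) (fun t ht => ?_)
    · have := hanti ht.1 hT ht.2
      exact mul_nonneg (rpow_pos_of_pos ht.1 _).le (by linarith)
    · have htpos : (0 : ℝ) < t := hT.trans ht
      have := hanti hT htpos ht
      exact mul_nonpos_of_nonneg_of_nonpos (rpow_pos_of_pos htpos _).le (by linarith)
end
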